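/- The KMP invariant: after processing the prefix Q[1..k] of the text, the state s of the KMP automaton simulation equals the length of the longest prefix of P that is a suffix of Q[1..k]. Consequently, position k is the endpoint of an occurrence of P in Q if and only if the simulation traverses the accepting transition (reaching state m) at step k. -/

import Mathlib

/-- The KMP failure function. -/
def kmpFail {α : Type*} [DecidableEq α] (P : List α) (s : ℕ) : ℕ :=
  Nat.findGreatest (fun k => (P.take k) <:+ (P.take s)) (s - 1)

lemma kmpFail_lt {α : Type*} [DecidableEq α] (P : List α) {s : ℕ} (h : s ≠ 0) :
    kmpFail P s < s := by
  have h1 : kmpFail P s ≤ s - 1 := Nat.findGreatest_le _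
  omega

/-- One transition of the KMP automaton from state `s` on character `c`: if
`c` matches the forward label `P[s+1]` go to `s + 1`, otherwise recursively
follow failure transitions (going to `0` if no state with a matching forward
label is found). -/
def kmpStep {α : Type*} [DecidableEq α] (P : List α) (s : ℕ) (c : α) : ℕ :=
  if P[s]? = some c then s + 1
  else if h : s = 0 then 0
  else kmpStep P (kmpFail P s) c
termination_by s
decreasing_by exact kmpFail_lt P h

/-- The state of the KMP simulation after processing a text `Q` from state `0`. -/
def kmpRun {α : Type*} [DecidableEq α] (P Q : List α) : ℕ :=
  Q.foldl (kmpStep P) 0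

/-!
Call the longest prefix of `P` that is a suffix of `T` the overlap of `T` with `P`.
A nonempty prefix `P.take (j + 1)` is a suffix of `T ++ [c]` exactly when `P.take j` is a suffix
of `T` and `P[j] = c`. Hence, if `s` is the overlap of `T`, the overlap of `T ++ [c]` is that of
`P.take s ++ [c]`; and since the failure links run through the borders of `P.take s` in decreasing
order, `kmpStep` stops at the longest border extendable by `c`.
-/

namespace List

variable {α : Type*}

theorem take_succ_suffix_concat_iff {P T : List α} {c : α} {j : ℕ} (hj : j < P.length) :
    P.take (j + 1) <:+ T ++ [c] ↔ P.take j <:+ T ∧ P[j]? = some c := by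
  rw [take_add_one, getElem?_eq_getElem hj, Option.toList_some,
    suffix_append_inj_of_length_eq (s₁ := [P[j]]) (s₂ := [c]) rfl]
  simp

end List

open List

section Overlap

variable {α : Type*}

structure IsLongestOverlap (P T : List α) (n : ℕ) : Prop where
  le_length : n ≤ P.length
  take_suffix : P.take n <:+ T
  le_of_take_suffix : ∀ j ≤ P.length, P.take j <:+ T → j ≤ n

theorem isLongestOverlap_nil (P : List α) : IsLongestOverlap P [] 0 where
  le_length := Nat.zero_le _
  take_suffix := by simp
  le_of_take_suffix j hj hsuf := by simpa [hj] using hsuf.length_le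

namespace IsLongestOverlap

variable {P T : List α} {n : ℕ}

theorem suffix_iff_eq_length (h : IsLongestOverlap P T n) : P <:+ T ↔ n = P.length := by
  constructor
  · intro hP
    exact le_antisymm h.le_length (h.le_of_take_suffix _ le_rfl (by simpa using hP))
  · intro hn
    simpa [hn] using h.take_suffix

theorem concat_of_take_concat {c : α} {f : ℕ} (h : IsLongestOverlap P (P.take f ++ [c]) n)
    (hf : P.take f <:+ T) (hmax : ∀ j < P.length, P.take j <:+ T → P[j]? = some c → j ≤ f) :
    IsLongestOverlap P (T ++ [c]) n where
  le_length := h.le_length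
  take_suffix :=
    h.take_suffix.trans ((suffix_append_inj_of_length_eq (s₁ := [c]) rfl).2 ⟨hf, rfl⟩)
  le_of_take_suffix := by
    rintro (_ | j) hj hsuf
    · exact Nat.zero_le _
    · obtain ⟨hjT, hjc⟩ := (take_succ_suffix_concat_iff hj).1 hsuf
      have hjf : P.take j <:+ P.take f :=
        suffix_of_suffix_length_le hjT hf (by simp [hmax j hj hjT hjc])
      exact h.le_of_take_suffix _ hj ((take_succ_suffix_concat_iff hj).2 ⟨hjf, hjc⟩)

end IsLongestOverlap

theorem isLongestOverlap_take_concat_of_getElem? {P : List α} {s : ℕ} {c : α}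
    (hc : P[s]? = some c) : IsLongestOverlap P (P.take s ++ [c]) (s + 1) where
  le_length := (List.getElem?_eq_some_iff.1 hc).1
  take_suffix :=
    (take_succ_suffix_concat_iff (List.getElem?_eq_some_iff.1 hc).1).2 ⟨suffix_refl _, hc⟩
  le_of_take_suffix j hj hsuf := by
    have := hsuf.length_le
    simp only [length_append, length_take, length_singleton] at this
    omega

theorem isLongestOverlap_singleton_zero {P : List α} {c : α} (hc : P[0]? ≠ some c) :
    IsLongestOverlap P [c] 0 where
  le_length := Nat.zero_le _
  take_suffix := by simp
  le_of_take_suffix := by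
    rintro (_ | j) hj hsuf
    · exact le_rfl
    · obtain ⟨hj0, hjc⟩ := (take_succ_suffix_concat_iff (T := []) hj).1 hsuf
      obtain rfl : j = 0 := by simpa [ne_nil_of_length_pos (Nat.zero_lt_of_lt hj)] using hj0
      exact absurd hjc hc

end Overlap

section KMP

variable {α : Type*} [DecidableEq α]

theorem take_kmpFail_suffix (P : List α) (s : ℕ) : P.take (kmpFail P s) <:+ P.take s :=
  Nat.findGreatest_spec (P := fun k => P.take k <:+ P.take s) (Nat.zero_le _) (by simp)

theorem le_kmpFail {P : List α} {j s : ℕ} (hjs : j < s) (h : P.take j <:+ P.take s) :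
    j ≤ kmpFail P s :=
  Nat.le_findGreatest (by omega) h

theorem isLongestOverlap_kmpStep (P : List α) (c : α) (s : ℕ) (hs : s ≤ P.length) :
    IsLongestOverlap P (P.take s ++ [c]) (kmpStep P s c) := by
  induction s using Nat.strong_induction_on with
  | _ s ih =>
    rw [kmpStep]
    split_ifs with hc hs0
    · exact isLongestOverlap_take_concat_of_getElem? hc
    · subst hs0
      simpa using isLongestOverlap_singleton_zero hc
    · have hfail := kmpFail_lt P hs0
      refine (ih _ hfail (by omega)).concat_of_take_concat (take_kmpFail_suffix P s) ?_
      intro j _ hjs hjc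
      have hj_le : j ≤ s := by
        have := hjs.length_le
        simp only [length_take] at this
        omega
      have hj_ne : j ≠ s := by rintro rfl; exact hc hjc
      exact le_kmpFail (by omega) hjs

theorem kmpRun_concat (P T : List α) (c : α) :
    kmpRun P (T ++ [c]) = kmpStep P (kmpRun P T) c := by
  simp [kmpRun]

theorem isLongestOverlap_kmpRun (P T : List α) : IsLongestOverlap P T (kmpRun P T) := by
  induction T using List.reverseRecOn with
  | nil => exact isLongestOverlap_nil P
  | append_singleton T c ih =>
    rw [kmpRun_concat]
    exact (isLongestOverlap_kmpStep P c _ ih.le_length).concat_of_take_concat ih.take_suffix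
      fun j hj hjT _ => ih.le_of_take_suffix j hj.le hjT

end KMP

theorem kmp_invariant_general {α : Type*} [DecidableEq α] (P Q : List α) (k : ℕ) :
    (kmpRun P (Q.take k) ≤ P.length ∧
      (P.take (kmpRun P (Q.take k))) <:+ (Q.take k) ∧
      ∀ j ≤ P.length, (P.take j) <:+ (Q.take k) → j ≤ kmpRun P (Q.take k)) ∧
    (P <:+ Q.take k ↔ kmpRun P (Q.take k) = P.length) := by
  have h := isLongestOverlap_kmpRun P (Q.take k)
  exact ⟨⟨h.le_length, h.take_suffix, h.le_of_take_suffix⟩, h.suffix_iff_eq_length⟩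

/-- The KMP invariant: after processing the prefix `Q[1..k]`, the state of the
simulation is the length of the longest prefix of `P` that is a suffix of
`Q[1..k]`; consequently `k` is the endpoint of an occurrence of `P` in `Q` iff
the simulation is in the accepting state `m` after step `k`. -/
theorem kmp_invariant {α : Type*} [DecidableEq α] (P Q : List α) (k : ℕ)
    (hk : k ≤ Q.length) :
    (kmpRun P (Q.take k) ≤ P.length ∧
      (P.take (kmpRun P (Q.take k))) <:+ (Q.take k) ∧
      ∀ j ≤ P.length, (P.take j) <:+ (Q.take k) → j ≤ kmpRun P (Q.take k)) ∧
    (P <:+ Q.take k ↔ kmpRun P (Q.take k) = P.length) :=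
  kmp_invariant_general P Q k
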